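/- For the Lie algebra [E1,E2]=2ξ, [ξ,E1]=(1−μ/2)E1+εE2, [ξ,E2]=−ε(κ+1)E1−(1−μ/2)E2 with ε=±1 and metric g(ξ,ξ)=1, g(E1,E2)=1 (other basis products zero), the Levi-Civita connection of the corresponding left-invariant metric satisfies ∇_ξξ=0, ∇_ξE1=−(μ/2)E1, ∇_ξE2=(μ/2)E2, ∇_{E1}ξ=−E1−εE2, ∇_{E1}E1=εξ, ∇_{E1}E2=ξ, ∇_{E2}ξ=ε(κ+1)E1+E2, ∇_{E2}E1=−ξ, ∇_{E2}E2=−ε(κ+1)ξ. -/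

import Mathlib

/-! The Koszul formula pins down `∇_X Y` because the metric is nondegenerate, so each of the nine
identities reduces to checking that the claimed vector satisfies the formula, a polynomial
identity in the coordinates of the test vector `Z`. -/

noncomputable section

def ξ : Fin 3 → ℝ := ![1, 0, 0]
def E1 : Fin 3 → ℝ := ![0, 1, 0]
def E2 : Fin 3 → ℝ := ![0, 0, 1]

/-- Artin (pseudo-Riemannian) metric: g(ξ,ξ) = 1, g(E1,E2) = 1, other products zero. -/
def ip (x y : Fin 3 → ℝ) : ℝ := x 0 * y 0 + x 1 * y 2 + x 2 * y 1

/-- Bracket [E1,E2] = 2ξ, [ξ,E1] = (1−μ/2)E1 + εE2, [ξ,E2] = −ε(κ+1)E1 − (1−μ/2)E2. -/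
def br (κ μ ε : ℝ) (x y : Fin 3 → ℝ) : Fin 3 → ℝ :=
  (x 1 * y 2 - x 2 * y 1) • ![2, 0, 0] +
  (x 0 * y 1 - x 1 * y 0) • ![0, 1 - μ / 2, ε] +
  (x 0 * y 2 - x 2 * y 0) • ![0, -(ε * (κ + 1)), -(1 - μ / 2)]

def koszul (κ μ ε : ℝ) (X Y Z : Fin 3 → ℝ) : ℝ :=
  ip (br κ μ ε X Y) Z - ip (br κ μ ε Y Z) X + ip (br κ μ ε Z X) Y

theorem ip_ξ (x : Fin 3 → ℝ) : ip x ξ = x 0 := by simp [ip, ξ]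
theorem ip_E1 (x : Fin 3 → ℝ) : ip x E1 = x 2 := by simp [ip, E1]
theorem ip_E2 (x : Fin 3 → ℝ) : ip x E2 = x 1 := by simp [ip, E2]

theorem eq_of_forall_ip_eq {u v : Fin 3 → ℝ} (h : ∀ Z, ip u Z = ip v Z) : u = v := by
  have h0 := h ξ; have h1 := h E2; have h2 := h E1
  rw [ip_ξ, ip_ξ] at h0; rw [ip_E2, ip_E2] at h1; rw [ip_E1, ip_E1] at h2
  ext i; fin_cases i <;> assumption

theorem eq_of_koszul {κ μ ε : ℝ} {nabla : (Fin 3 → ℝ) → (Fin 3 → ℝ) → (Fin 3 → ℝ)}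
    (hK : ∀ X Y Z, 2 * ip (nabla X Y) Z = koszul κ μ ε X Y Z) {X Y v : Fin 3 → ℝ}
    (hv : ∀ Z, 2 * ip v Z = koszul κ μ ε X Y Z) : nabla X Y = v :=
  eq_of_forall_ip_eq fun Z => by linarith [hK X Y Z, hv Z]

theorem paracontact_connection_general (κ μ ε : ℝ)
    (nabla : (Fin 3 → ℝ) → (Fin 3 → ℝ) → (Fin 3 → ℝ))
    (hK : ∀ X Y Z, 2 * ip (nabla X Y) Z =
      ip (br κ μ ε X Y) Z - ip (br κ μ ε Y Z) X + ip (br κ μ ε Z X) Y) :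
    nabla ξ ξ = 0 ∧
    nabla ξ E1 = -(μ / 2) • E1 ∧
    nabla ξ E2 = (μ / 2) • E2 ∧
    nabla E1 ξ = -E1 - ε • E2 ∧
    nabla E1 E1 = ε • ξ ∧
    nabla E1 E2 = ξ ∧
    nabla E2 ξ = (ε * (κ + 1)) • E1 + E2 ∧
    nabla E2 E1 = -ξ ∧
    nabla E2 E2 = -(ε * (κ + 1)) • ξ := by
  refine ⟨?_, ?_, ?_, ?_, ?_, ?_, ?_, ?_, ?_⟩ <;>
    refine eq_of_koszul hK fun Z => ?_ <;>
    simp [koszul, ip, br, ξ, E1, E2] <;> ring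

/-- The Levi-Civita connection (Koszul formula) of the left-invariant metric of the
paracontact metric (κ,μ)-Lie algebra has the stated coefficients. -/
theorem paracontact_connection (κ μ ε : ℝ) (hε : ε = 1 ∨ ε = -1)
    (nabla : (Fin 3 → ℝ) → (Fin 3 → ℝ) → (Fin 3 → ℝ))
    (hK : ∀ X Y Z, 2 * ip (nabla X Y) Z =
      ip (br κ μ ε X Y) Z - ip (br κ μ ε Y Z) X + ip (br κ μ ε Z X) Y) :
    nabla ξ ξ = 0 ∧
    nabla ξ E1 = -(μ / 2) • E1 ∧
    nabla ξ E2 = (μ / 2) • E2 ∧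
    nabla E1 ξ = -E1 - ε • E2 ∧
    nabla E1 E1 = ε • ξ ∧
    nabla E1 E2 = ξ ∧
    nabla E2 ξ = (ε * (κ + 1)) • E1 + E2 ∧
    nabla E2 E1 = -ξ ∧
    nabla E2 E2 = -(ε * (κ + 1)) • ξ :=
  paracontact_connection_general κ μ ε nabla hK
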